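/- arXiv:1103.2487 — 7 statements merged into one kernel-verified Lean document; each statement's English description precedes it below -/
import Mathlib

section
/- A simple game G=(P,W) is a weighted majority game if and only if it admits a weighted representation in which ~_G-equivalent players receive equal weights; that is, G is weighted iff there exist nonnegative real weights w_1,...,w_n with w_i = w_j whenever i ~_G j and a threshold q such that X∈W iff Σ_{i∈X} w_i ≥ q. -/
/-!
If `(w, q)` represents the game, so does `(w ∘ σ, q)` for every permutation `σ` of the players
that preserves `W`. Summing these over the whole symmetry group `Γ` gives a representation
`(∑ σ ∈ Γ, w ∘ σ, |Γ| q)` whose weights are `Γ`-invariant. If `i ~ j` then the transposition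
`(i j)` lies in `Γ`, so the averaged weights of `i` and `j` agree.
-/

open Finset
open scoped Pointwise

section

variable {α : Type*}

section Swap

variable [DecidableEq α]

def SymmetricPlayers (W : Set (Finset α)) (i j : α) : Prop :=
  ∀ X : Finset α, i ∉ X → j ∉ X → (insert i X ∈ W ↔ insert j X ∈ W)

theorem SymmetricPlayers.symm {W : Set (Finset α)} {i j : α} (h : SymmetricPlayers W i j) :
    SymmetricPlayers W j i :=
  fun X hj hi => (h X hi hj).symm

theorem swap_smul_finset_of_mem_iff_mem {i j : α} {X : Finset α} (h : i ∈ X ↔ j ∈ X) :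
    Equiv.swap i j • X = X := by
  ext a
  rw [← inv_smul_mem_iff, Equiv.swap_inv, Equiv.Perm.smul_def, Equiv.swap_apply_def]
  split_ifs with hai haj <;> simp_all

theorem swap_smul_finset_of_mem_of_notMem {i j : α} {X : Finset α} (hi : i ∈ X) (hj : j ∉ X) :
    Equiv.swap i j • X = insert j (X.erase i) := by
  conv_lhs => rw [← insert_erase hi]
  rw [smul_finset_insert, Equiv.Perm.smul_def, Equiv.swap_apply_left,
    swap_smul_finset_of_mem_iff_mem (by simp [hj])]

theorem swap_smul_finset_mem_iff {W : Set (Finset α)} {i j : α} (h : SymmetricPlayers W i j)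
    (X : Finset α) : Equiv.swap i j • X ∈ W ↔ X ∈ W := by
  by_cases hij : i ∈ X ↔ j ∈ X
  · rw [swap_smul_finset_of_mem_iff_mem hij]
  wlog hi : i ∈ X generalizing i j
  · rw [Equiv.swap_comm]
    exact this h.symm (by tauto) (by tauto)
  have hj : j ∉ X := by tauto
  rw [swap_smul_finset_of_mem_of_notMem hi hj, ← h _ (notMem_erase i X) (by simp [hj]),
    insert_erase hi]

theorem swap_mem_stabilizer {W : Set (Finset α)} {i j : α} (h : SymmetricPlayers W i j) :
    Equiv.swap i j ∈ MulAction.stabilizer (Equiv.Perm α) W := by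
  ext X
  rw [Set.mem_smul_set_iff_inv_smul_mem, Equiv.swap_inv, swap_smul_finset_mem_iff h]

end Swap

theorem sum_smul_finset [DecidableEq α] {M Γ : Type*} [AddCommMonoid M] [Group Γ]
    [MulAction Γ α] (w : α → M) (g : Γ) (X : Finset α) :
    ∑ i ∈ g • X, w i = ∑ i ∈ X, w (g • i) :=
  sum_image fun _ _ _ _ h => MulAction.injective g h

section Symmetrize

variable (Γ : Type*) [Group Γ] [Fintype Γ] [MulAction Γ α]

def symmetrize (w : α → ℝ) (i : α) : ℝ :=
  ∑ g : Γ, w (g • i)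

variable {Γ}

theorem symmetrize_nonneg {w : α → ℝ} (hw : ∀ i, 0 ≤ w i) (i : α) : 0 ≤ symmetrize Γ w i :=
  sum_nonneg fun _ _ => hw _

theorem symmetrize_smul (w : α → ℝ) (h : Γ) (i : α) :
    symmetrize Γ w (h • i) = symmetrize Γ w i :=
  Fintype.sum_equiv (Equiv.mulRight h) _ _ fun g => by simp [mul_smul]

theorem sum_symmetrize [DecidableEq α] (w : α → ℝ) (X : Finset α) :
    ∑ i ∈ X, symmetrize Γ w i = ∑ g : Γ, ∑ i ∈ g • X, w i := by
  simp only [symmetrize, sum_smul_finset]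
  exact sum_comm

end Symmetrize

def IsWeightedRep (W : Set (Finset α)) (w : α → ℝ) (q : ℝ) : Prop :=
  ∀ X : Finset α, X ∈ W ↔ q ≤ ∑ i ∈ X, w i

theorem IsWeightedRep.symmetrize [DecidableEq α] {Γ : Type*} [Group Γ] [Fintype Γ]
    [MulAction Γ α] {W : Set (Finset α)} {w : α → ℝ} {q : ℝ} (hW : ∀ g : Γ, g • W = W)
    (h : IsWeightedRep W w q) : IsWeightedRep W (symmetrize Γ w) (Fintype.card Γ * q) := by
  have hmem (g : Γ) (X : Finset α) : g • X ∈ W ↔ X ∈ W := by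
    simpa only [hW g] using Set.smul_mem_smul_set_iff (a := g) (x := X) (s := W)
  intro X
  rw [sum_symmetrize, ← nsmul_eq_mul, ← card_univ, ← sum_const]
  by_cases hX : X ∈ W
  · simp only [hX, true_iff]
    exact sum_le_sum fun g _ => (h _).1 ((hmem g X).2 hX)
  · simp only [hX, false_iff, not_le]
    exact sum_lt_sum_of_nonempty univ_nonempty fun g _ =>
      not_le.1 fun hg => hX ((hmem g X).1 ((h _).2 hg))

end

theorem stmt_4_general {α : Type*} [Fintype α] [DecidableEq α] (W : Set (Finset α)) :
    (∃ (w : α → ℝ) (q : ℝ), (∀ i, 0 ≤ w i) ∧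
        ∀ X : Finset α, X ∈ W ↔ q ≤ ∑ i ∈ X, w i) ↔
      (∃ (w : α → ℝ) (q : ℝ), (∀ i, 0 ≤ w i) ∧
        (∀ i j : α, (∀ X : Finset α, i ∉ X → j ∉ X →
            (insert i X ∈ W ↔ insert j X ∈ W)) → w i = w j) ∧
        ∀ X : Finset α, X ∈ W ↔ q ≤ ∑ i ∈ X, w i) := by
  classical
  refine ⟨fun ⟨w, q, hw, hrep⟩ => ?_, fun ⟨w, q, hw, _, hrep⟩ => ⟨w, q, hw, hrep⟩⟩
  let Γ := MulAction.stabilizer (Equiv.Perm α) W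
  refine ⟨symmetrize Γ w, Fintype.card Γ * q, symmetrize_nonneg hw, fun i j hij => ?_,
    IsWeightedRep.symmetrize (fun g => g.2) hrep⟩
  simpa using (symmetrize_smul w (⟨_, swap_mem_stabilizer hij⟩ : Γ) i).symm

/-- A simple game `G = (P, W)` is a weighted majority game if and
only if it admits a weighted representation in which `~_G`-equivalent players
receive equal weights. -/
theorem stmt_4 {α : Type*} [Fintype α] [DecidableEq α] (W : Set (Finset α))
    (hne : W.Nonempty)
    (hmono : ∀ X Y : Finset α, X ∈ W → X ⊆ Y → Y ∈ W) :
    (∃ (w : α → ℝ) (q : ℝ), (∀ i, 0 ≤ w i) ∧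
        ∀ X : Finset α, X ∈ W ↔ q ≤ ∑ i ∈ X, w i) ↔
      (∃ (w : α → ℝ) (q : ℝ), (∀ i, 0 ≤ w i) ∧
        (∀ i j : α, (∀ X : Finset α, i ∉ X → j ∉ X →
            (insert i X ∈ W ↔ insert j X ∈ W)) → w i = w j) ∧
        ∀ X : Finset α, X ∈ W ↔ q ≤ ∑ i ∈ X, w i) :=
  stmt_4_general W
end

section
/- Let H be the disjunctive hierarchical game on P = P_1∪...∪P_m (disjoint nonempty levels, |P_i| = n_i) with thresholds k_1<...<k_m satisfying k_1 ≤ n_1 and k_i < k_{i-1}+n_i for 1<i<m. Then H has no dummy players if and only if k_m < k_{m-1} + n_m; moreover, if k_m ≥ k_{m-1} + n_m then every player of the last level P_m is a dummy. -/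
/-- Cumulative union `P_1 ∪ ... ∪ P_i` of the first `i` (1-indexed) levels. -/
def cumUnion {α : Type*} [DecidableEq α] (P : ℕ → Finset α) (i : ℕ) : Finset α :=
  (Finset.Icc 1 i).biUnion P

/-- Winning predicate of the disjunctive hierarchical game. -/
def disjWin {α : Type*} [DecidableEq α] (m : ℕ) (P : ℕ → Finset α) (k : ℕ → ℕ)
    (X : Finset α) : Prop :=
  ∃ i, 1 ≤ i ∧ i ≤ m ∧ k i ≤ (X ∩ cumUnion P i).card

/-- A minimal winning coalition: winning, and no proper subset is winning. -/
def minWinning {α : Type*} [DecidableEq α] (m : ℕ) (P : ℕ → Finset α) (k : ℕ → ℕ)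
    (X : Finset α) : Prop :=
  disjWin m P k X ∧ ∀ Y : Finset α, Y ⊂ X → ¬ disjWin m P k Y

/-- A dummy player: one that belongs to no minimal winning coalition. -/
def isDummy {α : Type*} [DecidableEq α] (m : ℕ) (P : ℕ → Finset α) (k : ℕ → ℕ)
    (p : α) : Prop :=
  ∀ X : Finset α, minWinning m P k X → p ∉ X

/-!
For a player `q` of level `j` one builds, level by level, a set `B ∌ q` inside
`P_1 ∪ ... ∪ P_j` that meets every `P_1 ∪ ... ∪ P_i`, `i ≤ j`, in exactly `k_i - 1` players:
take `k_1 - 1` players of `P_1`, then `k_i - k_{i-1}` players of each `P_i`, which is possible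
without using `q` because `k_i - k_{i-1} < n_i`. Then `B ∪ {q}` wins at level `j` with exactly
`k_j` players and at no lower level, hence is minimal winning. Conversely, if
`k_{m-1} + n_m ≤ k_m` then a minimal winning coalition containing some `p ∈ P_m` stays winning
after removing `p`: at a level `i < m` nothing changes, and at level `m` it has fewer than
`k_{m-1}` players below `P_m`.
-/

section

open Finset

variable {α : Type*} [DecidableEq α] {P : ℕ → Finset α}

lemma mem_cumUnion {i : ℕ} {a : α} : a ∈ cumUnion P i ↔ ∃ t, 1 ≤ t ∧ t ≤ i ∧ a ∈ P t := by
  simp [cumUnion, and_assoc]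

lemma cumUnion_succ (j : ℕ) : cumUnion P (j + 1) = cumUnion P j ∪ P (j + 1) := by
  ext a
  simp only [mem_union, mem_cumUnion]
  constructor
  · rintro ⟨t, h1, h2, ht⟩
    rcases h2.eq_or_lt with rfl | h
    · exact Or.inr ht
    · exact Or.inl ⟨t, h1, by omega, ht⟩
  · rintro (⟨t, h1, h2, ht⟩ | h)
    · exact ⟨t, h1, by omega, ht⟩
    · exact ⟨j + 1, by omega, le_rfl, h⟩

lemma subset_cumUnion {i j : ℕ} (hi : 1 ≤ i) (hij : i ≤ j) : P i ⊆ cumUnion P j :=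
  fun _ ha => mem_cumUnion.mpr ⟨i, hi, hij, ha⟩

lemma cumUnion_mono {i j : ℕ} (hij : i ≤ j) : cumUnion P i ⊆ cumUnion P j := fun _ ha => by
  obtain ⟨t, h1, h2, ht⟩ := mem_cumUnion.mp ha
  exact mem_cumUnion.mpr ⟨t, h1, h2.trans hij, ht⟩

lemma disjoint_cumUnion_of_lt {m i j : ℕ}
    (hdisj : ∀ i j, 1 ≤ i → i < j → j ≤ m → Disjoint (P i) (P j)) (hij : i < j) (hjm : j ≤ m) :
    Disjoint (cumUnion P i) (P j) := by
  refine disjoint_left.mpr fun a ha => ?_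
  obtain ⟨t, h1, h2, ht⟩ := mem_cumUnion.mp ha
  exact disjoint_left.mp (hdisj t j h1 (by omega) hjm) ht

lemma card_inter_cumUnion_succ_le (X : Finset α) (j : ℕ) :
    (X ∩ cumUnion P (j + 1)).card ≤ (X ∩ cumUnion P j).card + (P (j + 1)).card := by
  rw [cumUnion_succ, inter_union_distrib_left]
  exact (card_union_le _ _).trans (Nat.add_le_add_left (card_le_card inter_subset_right) _)

lemma exists_subset_notMem_card_eq (s : Finset α) (q : α) {r : ℕ} (hr : r < s.card) :
    ∃ T ⊆ s, q ∉ T ∧ T.card = r := by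
  obtain ⟨T, hT, hTcard⟩ :=
    exists_subset_card_eq ((Nat.le_pred_of_lt hr).trans (pred_card_le_card_erase (a := q)))
  exact ⟨T, hT.trans (erase_subset q s), fun hq => notMem_erase q s (hT hq), hTcard⟩

lemma exists_avoiding_card_inter_cumUnion_eq {k : ℕ → ℕ} (q : α) {n : ℕ} (hn : 1 ≤ n)
    (hdisj : ∀ i j, 1 ≤ i → i < j → j ≤ n → Disjoint (P i) (P j))
    (hk1 : 0 < k 1) (hkn1 : k 1 ≤ (P 1).card)
    (hk : ∀ i, 1 < i → i ≤ n → k (i - 1) < k i ∧ k i < k (i - 1) + (P i).card) :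
    ∃ B ⊆ cumUnion P n, q ∉ B ∧ ∀ i, 1 ≤ i → i ≤ n → (B ∩ cumUnion P i).card + 1 = k i := by
  induction n, hn using Nat.le_induction with
  | base =>
    have hC1 : cumUnion P 1 = P 1 := by simp [cumUnion]
    obtain ⟨T, hT, hqT, hTcard⟩ := exists_subset_notMem_card_eq (P 1) q (r := k 1 - 1) (by omega)
    refine ⟨T, hC1 ▸ hT, hqT, fun i h1 h2 => ?_⟩
    obtain rfl : i = 1 := by omega
    rw [hC1, inter_eq_left.mpr hT]
    omega
  | succ n hn ih =>
    obtain ⟨B, hBC, hqB, hB⟩ := ih (fun i j h1 h2 h3 => hdisj i j h1 h2 (by omega))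
      (fun i h1 h2 => hk i h1 (by omega))
    obtain ⟨hlt, hgap⟩ := hk (n + 1) (by omega) le_rfl
    simp only [Nat.add_sub_cancel] at hlt hgap
    obtain ⟨T, hT, hqT, hTcard⟩ :=
      exists_subset_notMem_card_eq (P (n + 1)) q (r := k (n + 1) - k n) (by omega)
    have hTC : ∀ i ≤ n, Disjoint T (cumUnion P i) := fun i hi =>
      (disjoint_cumUnion_of_lt hdisj (by omega) le_rfl).symm.mono_left hT
    have hBn : B.card + 1 = k n := by simpa [inter_eq_left.mpr hBC] using hB n hn le_rfl
    refine ⟨B ∪ T, union_subset (hBC.trans (cumUnion_mono (by omega)))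
      (hT.trans (subset_cumUnion (by omega) le_rfl)), by simp [hqB, hqT], fun i h1 h2 => ?_⟩
    rcases h2.lt_or_eq with h2 | rfl
    · rw [union_inter_distrib_right, (disjoint_iff_inter_eq_empty.mp (hTC i (by omega))),
        union_empty]
      exact hB i h1 (by omega)
    · rw [inter_eq_left.mpr (union_subset (hBC.trans (cumUnion_mono (by omega)))
        (hT.trans (subset_cumUnion (by omega) le_rfl))),
        card_union_of_disjoint ((hTC n le_rfl).symm.mono_left hBC)]
      omega

lemma minWinning_of_card_eq {m j : ℕ} {k : ℕ → ℕ} {X : Finset α} (hj : 1 ≤ j) (hjm : j ≤ m)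
    (hk : ∀ i, j < i → i ≤ m → k j ≤ k i) (hX : X ⊆ cumUnion P j) (hcard : X.card = k j)
    (hlow : ∀ i, 1 ≤ i → i < j → (X ∩ cumUnion P i).card < k i) : minWinning m P k X := by
  refine ⟨⟨j, hj, hjm, by rw [inter_eq_left.mpr hX, hcard]⟩, ?_⟩
  rintro Y hYX ⟨i, hi1, him, hwin⟩
  rcases lt_or_ge i j with hij | hji
  · have := card_le_card (inter_subset_inter_right hYX.subset : Y ∩ cumUnion P i ⊆ _)
    have := hlow i hi1 hij
    omega
  · have hkji : k j ≤ k i := hji.eq_or_lt.elim (fun h => h ▸ le_rfl) (hk i · him)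
    have := card_le_card (inter_subset_left : Y ∩ cumUnion P i ⊆ Y)
    have := card_lt_card hYX
    omega

lemma not_isDummy_of_mem {m j : ℕ} {k : ℕ → ℕ}
    (hdisj : ∀ i j, 1 ≤ i → i < j → j ≤ m → Disjoint (P i) (P j))
    (hk1 : 0 < k 1) (hkn1 : k 1 ≤ (P 1).card)
    (hkmono : ∀ i j, 1 ≤ i → i < j → j ≤ m → k i < k j)
    (hgap : ∀ i, 1 < i → i ≤ m → k i < k (i - 1) + (P i).card)
    {p : α} (hj : 1 ≤ j) (hjm : j ≤ m) (hp : p ∈ P j) : ¬ isDummy m P k p := by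
  obtain ⟨B, hBC, hpB, hB⟩ := exists_avoiding_card_inter_cumUnion_eq p hj
    (fun i i' h1 h2 h3 => hdisj i i' h1 h2 (h3.trans hjm)) hk1 hkn1
    (fun i h1 h2 => ⟨hkmono _ _ (by omega) (by omega) (h2.trans hjm), hgap i h1 (h2.trans hjm)⟩)
  have hBi : ∀ i, 1 ≤ i → i < j → (insert p B ∩ cumUnion P i).card < k i := fun i h1 h2 => by
    have hpi : p ∉ cumUnion P i := disjoint_right.mp (disjoint_cumUnion_of_lt hdisj h2 hjm) hp
    have := hB i h1 h2.le
    rw [insert_inter_of_notMem hpi]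
    omega
  have hBj := hB j hj le_rfl
  rw [inter_eq_left.mpr hBC] at hBj
  refine fun hdummy => hdummy (insert p B) (minWinning_of_card_eq hj hjm
    (fun i h1 h2 => (hkmono j i hj h1 h2).le) (insert_subset (subset_cumUnion hj le_rfl hp) hBC)
    (by rw [card_insert_of_notMem hpB]; omega) hBi) (mem_insert_self p B)

lemma isDummy_of_mem_last {m : ℕ} {k : ℕ → ℕ} (hm : 1 ≤ m)
    (hdisj : ∀ i j, 1 ≤ i → i < j → j ≤ m + 1 → Disjoint (P i) (P j))
    (hle : k m + (P (m + 1)).card ≤ k (m + 1)) {p : α} (hp : p ∈ P (m + 1)) :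
    isDummy (m + 1) P k p := by
  rintro X ⟨⟨i, hi1, him, hwin⟩, hmin⟩ hpX
  have hlose : ∀ i, 1 ≤ i → i ≤ m → (X ∩ cumUnion P i).card < k i := fun i h1 h2 => by
    have hpi : p ∉ cumUnion P i :=
      disjoint_right.mp (disjoint_cumUnion_of_lt hdisj (by omega) le_rfl) hp
    rw [← erase_eq_of_notMem (fun h => hpi (mem_inter.mp h).2), ← erase_inter]
    exact not_le.mp fun h => hmin _ (erase_ssubset hpX) ⟨i, h1, by omega, h⟩
  rcases him.lt_or_eq with him | rfl
  · exact absurd hwin (not_le.mpr (hlose i hi1 (by omega)))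
  · have := card_inter_cumUnion_succ_le (P := P) X m
    have := hlose m hm le_rfl
    omega

end

theorem stmt_6_general {α : Type*} [DecidableEq α]
    (m : ℕ) (hm : 2 ≤ m) (P : ℕ → Finset α) (k : ℕ → ℕ)
    (hdisj : ∀ i j, 1 ≤ i → i < j → j ≤ m → Disjoint (P i) (P j))
    (hlvlne : ∀ i, 1 ≤ i → i ≤ m → (P i).Nonempty)
    (hcover : ∀ a : α, ∃ i, 1 ≤ i ∧ i ≤ m ∧ a ∈ P i)
    (hkpos : ∀ i, 1 ≤ i → i ≤ m → 0 < k i)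
    (hkmono : ∀ i j, 1 ≤ i → i < j → j ≤ m → k i < k j)
    (ha : k 1 ≤ (P 1).card)
    (hb : ∀ i, 1 < i → i < m → k i < k (i - 1) + (P i).card) :
    ((∀ p : α, ¬ isDummy m P k p) ↔ k m < k (m - 1) + (P m).card) ∧
      (k (m - 1) + (P m).card ≤ k m → ∀ p ∈ P m, isDummy m P k p) := by
  have hlast : k (m - 1) + (P m).card ≤ k m → ∀ p ∈ P m, isDummy m P k p := by
    obtain ⟨m, rfl⟩ : ∃ m', m = m' + 1 := ⟨m - 1, by omega⟩
    exact fun hle p hp => isDummy_of_mem_last (by omega) hdisj hle hp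
  refine ⟨⟨fun hnd => not_le.mp fun hle => ?_, fun hgap p => ?_⟩, hlast⟩
  · obtain ⟨p, hp⟩ := hlvlne m (by omega) le_rfl
    exact hnd p (hlast hle p hp)
  · obtain ⟨j, hj1, hjm, hp⟩ := hcover p
    refine not_isDummy_of_mem hdisj (hkpos 1 le_rfl (by omega)) ha hkmono
      (fun i h1 h2 => h2.lt_or_eq.elim (hb i h1) ?_) hj1 hjm hp
    rintro rfl
    exact hgap

/-- a canonically represented disjunctive hierarchical game
(`k_1 ≤ n_1`, `k_i < k_{i-1} + n_i` for `1 < i < m`) has no dummy players iff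
`k_m < k_{m-1} + n_m`; moreover if `k_m ≥ k_{m-1} + n_m` then every player of
the last level `P_m` is a dummy. -/
theorem stmt_6 {α : Type*} [Fintype α] [DecidableEq α]
    (m : ℕ) (hm : 2 ≤ m) (P : ℕ → Finset α) (k : ℕ → ℕ)
    (hdisj : ∀ i j, 1 ≤ i → i < j → j ≤ m → Disjoint (P i) (P j))
    (hlvlne : ∀ i, 1 ≤ i → i ≤ m → (P i).Nonempty)
    (hcover : ∀ a : α, ∃ i, 1 ≤ i ∧ i ≤ m ∧ a ∈ P i)
    (hkpos : ∀ i, 1 ≤ i → i ≤ m → 0 < k i)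
    (hkmono : ∀ i j, 1 ≤ i → i < j → j ≤ m → k i < k j)
    (ha : k 1 ≤ (P 1).card)
    (hb : ∀ i, 1 < i → i < m → k i < k (i - 1) + (P i).card) :
    ((∀ p : α, ¬ isDummy m P k p) ↔ k m < k (m - 1) + (P m).card) ∧
      (k (m - 1) + (P m).card ≤ k m → ∀ p ∈ P m, isDummy m P k p) :=
  stmt_6_general m hm P k hdisj hlvlne hcover hkpos hkmono ha hb
end

section
/- The dual of a disjunctive hierarchical game is the conjunctive hierarchical game with the dualized thresholds: let H_∃ be the disjunctive hierarchical game on P = P_1∪...∪P_m (|P_i| = n_i) with thresholds k_1<...<k_m, and set k*_i = n_1+...+n_i − k_i + 1. Then a coalition X⊆P is winning in the dual game (H_∃)* if and only if |X∩(P_1∪...∪P_i)| ≥ k*_i for every i∈{1,...,m}. -/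
theorem pairwiseDisjoint_Icc_of_disjoint_of_lt {β : Type*} [PartialOrder β] [OrderBot β] {m : ℕ} {P : ℕ → β}
    (hdisj : ∀ i j, 1 ≤ i → i < j → j ≤ m → Disjoint (P i) (P j)) {i : ℕ} (him : i ≤ m) :
    Set.PairwiseDisjoint ↑(Finset.Icc 1 i) P := by
  intro a ha b hb hab
  simp only [Finset.coe_Icc, Set.mem_Icc] at ha hb
  rcases hab.lt_or_gt with h | h
  · exact hdisj a b ha.1 h (hb.2.trans him)
  · exact (hdisj b a hb.1 h (ha.2.trans him)).symm

section HierarchicalGame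

variable {α : Type*} [DecidableEq α]

theorem card_cumUnion {P : ℕ → Finset α} {i : ℕ}
    (hP : Set.PairwiseDisjoint ↑(Finset.Icc 1 i) P) :
    (cumUnion P i).card = ∑ j ∈ Finset.Icc 1 i, (P j).card :=
  Finset.card_biUnion hP

theorem not_disjWin_iff {m : ℕ} {P : ℕ → Finset α} {k : ℕ → ℕ} {Y : Finset α} :
    ¬ disjWin m P k Y ↔ ∀ i, 1 ≤ i → i ≤ m → (Y ∩ cumUnion P i).card < k i := by
  simp only [disjWin, not_exists, not_and, not_le]

theorem Finset.card_compl_inter_add_card_inter [Fintype α] (X s : Finset α) :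
    (Xᶜ ∩ s).card + (X ∩ s).card = s.card := by
  rw [Finset.inter_comm, ← Finset.sdiff_eq_inter_compl, Finset.inter_comm, add_comm,
    Finset.card_inter_add_card_sdiff]

end HierarchicalGame

theorem stmt_9_general {α : Type*} [Fintype α] [DecidableEq α]
    (m : ℕ) (P : ℕ → Finset α) (k : ℕ → ℕ)
    (hdisj : ∀ i j, 1 ≤ i → i < j → j ≤ m → Disjoint (P i) (P j)) :
    ∀ X : Finset α,
      ¬ disjWin m P k Xᶜ ↔
        ∀ i, 1 ≤ i → i ≤ m →
          (∑ j ∈ Finset.Icc 1 i, ((P j).card : ℤ)) - (k i : ℤ) + 1 ≤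
            ((X ∩ cumUnion P i).card : ℤ) := by
  intro X
  rw [not_disjWin_iff]
  refine forall₃_congr fun i _ him => ?_
  have hsplit := Finset.card_compl_inter_add_card_inter X (cumUnion P i)
  rw [card_cumUnion (pairwiseDisjoint_Icc_of_disjoint_of_lt hdisj him)] at hsplit
  rw [← Nat.cast_sum]
  omega

/-- the dual of a disjunctive hierarchical game is the conjunctive
hierarchical game with the dualized thresholds `k*_i = n_1 + ... + n_i - k_i + 1`:
a coalition `X` is winning in `(H_∃)*` (i.e. its complement `P ∖ X` is losing in
`H_∃`; the player set `P` is the whole finite type) iff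
`|X ∩ (P_1 ∪ ... ∪ P_i)| ≥ k*_i` for every `i ∈ {1, ..., m}`. -/
theorem stmt_9 {α : Type*} [Fintype α] [DecidableEq α]
    (m : ℕ) (hm : 1 ≤ m) (P : ℕ → Finset α) (k : ℕ → ℕ)
    (hdisj : ∀ i j, 1 ≤ i → i < j → j ≤ m → Disjoint (P i) (P j))
    (hlvlne : ∀ i, 1 ≤ i → i ≤ m → (P i).Nonempty)
    (hcover : ∀ a : α, ∃ i, 1 ≤ i ∧ i ≤ m ∧ a ∈ P i)
    (hkpos : ∀ i, 1 ≤ i → i ≤ m → 0 < k i)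
    (hkmono : ∀ i j, 1 ≤ i → i < j → j ≤ m → k i < k j) :
    ∀ X : Finset α,
      ¬ disjWin m P k Xᶜ ↔
        ∀ i, 1 ≤ i → i ≤ m →
          (∑ j ∈ Finset.Icc 1 i, ((P j).card : ℤ)) - (k i : ℤ) + 1 ≤
            ((X ∩ cumUnion P i).card : ℤ) :=
  stmt_9_general m P k hdisj
end

section
/- The dual of a conjunctive hierarchical game is the disjunctive hierarchical game with the dualized thresholds: let H_∀ be the conjunctive hierarchical game on P = P_1∪...∪P_m (|P_i| = n_i) with thresholds k_1<...<k_{m-1}≤k_m, and set k*_i = n_1+...+n_i − k_i + 1. Then a coalition X⊆P is winning in the dual game (H_∀)* if and only if there exists i∈{1,...,m} with |X∩(P_1∪...∪P_i)| ≥ k*_i. -/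
/-- Winning predicate of the conjunctive hierarchical game with `m` levels:
`X` is winning iff `|X ∩ (P_1 ∪ ... ∪ P_i)| ≥ k_i` for every `i ∈ {1, ..., m}`. -/
def conjWin {α : Type*} [DecidableEq α] (m : ℕ) (P : ℕ → Finset α) (k : ℕ → ℕ)
    (X : Finset α) : Prop :=
  ∀ i, 1 ≤ i → i ≤ m → k i ≤ (X ∩ cumUnion P i).card

open Finset

theorem card_cumUnion_s10 {α : Type*} [DecidableEq α] {P : ℕ → Finset α} {i : ℕ}
    (hdisj : (↑(Icc 1 i) : Set ℕ).PairwiseDisjoint P) :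
    #(cumUnion P i) = ∑ j ∈ Icc 1 i, #(P j) :=
  card_biUnion hdisj

theorem not_le_card_compl_inter_iff {α : Type*} [Fintype α] [DecidableEq α]
    (X C : Finset α) (k : ℕ) :
    ¬ k ≤ #(Xᶜ ∩ C) ↔ (#C : ℤ) - k + 1 ≤ #(X ∩ C) := by
  have hsplit : #(Xᶜ ∩ C) + #(X ∩ C) = #C := by
    rw [inter_comm Xᶜ, ← sdiff_eq_inter_compl, inter_comm X, card_sdiff_add_card_inter]
  omega

theorem stmt_10_general {α : Type*} [Fintype α] [DecidableEq α]
    (m : ℕ) (P : ℕ → Finset α) (k : ℕ → ℕ)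
    (hdisj : ∀ i j, 1 ≤ i → i < j → j ≤ m → Disjoint (P i) (P j)) :
    ∀ X : Finset α,
      ¬ conjWin m P k Xᶜ ↔
        ∃ i, 1 ≤ i ∧ i ≤ m ∧
          (∑ j ∈ Finset.Icc 1 i, ((P j).card : ℤ)) - (k i : ℤ) + 1 ≤
            ((X ∩ cumUnion P i).card : ℤ) := by
  intro X
  simp only [conjWin, not_forall, exists_prop]
  refine exists_congr fun i => and_congr_right fun _ => and_congr_right fun him => ?_
  have hlevels : (↑(Icc 1 i) : Set ℕ).PairwiseDisjoint P := by
    intro a ha b hb hab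
    simp only [coe_Icc, Set.mem_Icc] at ha hb
    rcases lt_or_gt_of_ne hab with h | h
    · exact hdisj a b ha.1 h (hb.2.trans him)
    · exact (hdisj b a hb.1 h (ha.2.trans him)).symm
  rw [not_le_card_compl_inter_iff, card_cumUnion_s10 hlevels]
  push_cast
  rfl

/-- the dual of a conjunctive hierarchical game (with thresholds
`k_1 < ... < k_{m-1} ≤ k_m`) is the disjunctive hierarchical game with the
dualized thresholds `k*_i = n_1 + ... + n_i - k_i + 1`: a coalition `X` is
winning in `(H_∀)*` (i.e. its complement is losing in `H_∀`; the player set is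
the whole finite type) iff `|X ∩ (P_1 ∪ ... ∪ P_i)| ≥ k*_i` for some `i`. -/
theorem stmt_10 {α : Type*} [Fintype α] [DecidableEq α]
    (m : ℕ) (hm : 1 ≤ m) (P : ℕ → Finset α) (k : ℕ → ℕ)
    (hdisj : ∀ i j, 1 ≤ i → i < j → j ≤ m → Disjoint (P i) (P j))
    (hlvlne : ∀ i, 1 ≤ i → i ≤ m → (P i).Nonempty)
    (hcover : ∀ a : α, ∃ i, 1 ≤ i ∧ i ≤ m ∧ a ∈ P i)
    (hkpos : ∀ i, 1 ≤ i → i ≤ m → 0 < k i)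
    (hkmono : ∀ i, 1 ≤ i → i + 1 < m → k i < k (i + 1))
    (hklast : 2 ≤ m → k (m - 1) ≤ k m) :
    ∀ X : Finset α,
      ¬ conjWin m P k Xᶜ ↔
        ∃ i, 1 ≤ i ∧ i ≤ m ∧
          (∑ j ∈ Finset.Icc 1 i, ((P j).card : ℤ)) - (k i : ℤ) + 1 ≤
            ((X ∩ cumUnion P i).card : ℤ) :=
  stmt_10_general m P k hdisj
end

section
/- Every canonical disjunctive hierarchical game has exactly one shift-maximal losing coalition: let G = H_∃(n,k) be the canonical disjunctive hierarchical game on the multiset P̄={1^{n_1},...,m^{n_m}} with k_1 ≤ n_1 and k_i < k_{i-1}+n_i for 1<i<m. If k_m < k_{m-1}+n_m, the unique shift-maximal losing submultiset is M = {1^{k_1−1}, 2^{k_2−k_1}, ..., m^{k_m−k_{m−1}}}; if k_m ≥ k_{m-1}+n_m, it is M = {1^{k_1−1}, 2^{k_2−k_1}, ..., (m−1)^{k_{m−1}−k_{m−2}}, m^{n_m}}. -/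
/-- A valid profile (submultiset of `P̄ = {1^{n_1}, ..., m^{n_m}}`), recorded as
the function giving the multiplicity of each (1-indexed) level. -/
def validProfile (m : ℕ) (n : ℕ → ℕ) (l : ℕ → ℕ) : Prop :=
  (∀ j, 1 ≤ j → j ≤ m → l j ≤ n j) ∧ ∀ j, (j = 0 ∨ m < j) → l j = 0

/-- Winning predicate of the canonical disjunctive hierarchical game `H_∃(n,k)`:
`{1^{ℓ_1}, ..., m^{ℓ_m}}` is winning iff `ℓ_1 + ... + ℓ_i ≥ k_i` for some `i`. -/
def mWin (m : ℕ) (k : ℕ → ℕ) (l : ℕ → ℕ) : Prop :=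
  ∃ i, 1 ≤ i ∧ i ≤ m ∧ k i ≤ ∑ j ∈ Finset.Icc 1 i, l j

/-- The profile obtained from `A` by a shift moving one copy of level `i` to a
(lower) level `j`. -/
def shifted (A : ℕ → ℕ) (i j : ℕ) : ℕ → ℕ :=
  fun l => if l = i then A i - 1 else if l = j then A j + 1 else A l

/-- A shift-maximal losing submultiset `Y` of the game `W` on
`P̄ = {1^{n_1}, ..., m^{n_m}}`: `Y` is a losing submultiset, every submultiset
strictly containing `Y` is winning, and there is no losing submultiset from
which `Y` is obtained by a shift. -/
def shiftMaxLosing (m : ℕ) (n : ℕ → ℕ) (W : (ℕ → ℕ) → Prop) (Y : ℕ → ℕ) : Prop :=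
  validProfile m n Y ∧ ¬ W Y ∧
    (∀ Z, validProfile m n Z → (∀ j, Y j ≤ Z j) → Y ≠ Z → W Z) ∧
    ¬ ∃ A i j, validProfile m n A ∧ ¬ W A ∧ 1 ≤ i ∧ i < j ∧ j ≤ m ∧
        1 ≤ A i ∧ A j < n j ∧ Y = shifted A i j

/-- The submultiset `M = {1^{k_1 - 1}, 2^{k_2 - k_1}, ..., m^{k_m - k_{m-1}}}`. -/
def Mprof (m : ℕ) (k : ℕ → ℕ) : ℕ → ℕ :=
  fun j => if j = 1 then k 1 - 1 else if 1 < j ∧ j ≤ m then k j - k (j - 1) else 0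

/-- The submultiset
`M' = {1^{k_1 - 1}, 2^{k_2 - k_1}, ..., (m-1)^{k_{m-1} - k_{m-2}}, m^{n_m}}`. -/
def Mprof' (m : ℕ) (n k : ℕ → ℕ) : ℕ → ℕ :=
  fun j => if j = m then n m else Mprof m k j

/-!
Call level `t` *tight* for a losing profile `Y` when `ℓ_1 + ... + ℓ_t = k_t - 1`. For losing `Y`,
maximality says exactly that every level `j` with room is followed by a tight level `s ≥ j`, and
not being a shift of a losing profile says exactly that whenever level `i` has room and a later
level `j` is nonempty, some level in `[i, j)` is tight. Level 1 always has room, and since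
`k_i < k_{i-1} + n_i`, a tight level followed only by full levels up to `t` makes `Y` win at `t`
unless it is `t` itself. So maximality makes the last level `c` tight (`c = m - 1` when
`k_m ≥ k_{m-1} + n_m`, where level `m` is then full), the shift condition carries tightness from
`t + 1` down to `t`, and a profile tight at every level `1, ..., c` is determined there.
-/

open Finset

section HierarchicalGame

variable {m : ℕ} {n k : ℕ → ℕ}

def partialSum (l : ℕ → ℕ) (t : ℕ) : ℕ := ∑ j ∈ Icc 1 t, l j

lemma mWin_iff {l : ℕ → ℕ} : mWin m k l ↔ ∃ i, 1 ≤ i ∧ i ≤ m ∧ k i ≤ partialSum l i :=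
  Iff.rfl

lemma not_mWin_iff {l : ℕ → ℕ} :
    ¬ mWin m k l ↔ ∀ t, 1 ≤ t → t ≤ m → partialSum l t < k t := by
  simp only [mWin_iff, not_exists, not_and, not_le]

lemma partialSum_zero (l : ℕ → ℕ) : partialSum l 0 = 0 := by simp [partialSum]

lemma partialSum_succ (l : ℕ → ℕ) (t : ℕ) :
    partialSum l (t + 1) = partialSum l t + l (t + 1) :=
  sum_Icc_succ_top (by omega) l

lemma partialSum_one (l : ℕ → ℕ) : partialSum l 1 = l 1 := by
  simpa [partialSum_zero] using partialSum_succ l 0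

lemma partialSum_add (l l' : ℕ → ℕ) (t : ℕ) :
    partialSum (l + l') t = partialSum l t + partialSum l' t :=
  sum_add_distrib

lemma partialSum_single {i : ℕ} (hi : 1 ≤ i) (t : ℕ) :
    partialSum (Pi.single i 1) t = if i ≤ t then 1 else 0 := by
  simp [partialSum, sum_pi_single', hi]

lemma partialSum_lt_partialSum {l l' : ℕ → ℕ} (hle : ∀ j, l j ≤ l' j) {j t : ℕ}
    (hj : 1 ≤ j) (hjt : j ≤ t) (hlt : l j < l' j) : partialSum l t < partialSum l' t :=
  sum_lt_sum (fun x _ => hle x) ⟨j, mem_Icc.2 ⟨hj, hjt⟩, hlt⟩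

lemma shifted_add_single {A : ℕ → ℕ} {i j : ℕ} (hij : i ≠ j) (hAi : 1 ≤ A i) :
    shifted A i j + Pi.single i 1 = A + Pi.single j 1 := by
  funext l
  simp only [Pi.add_apply, shifted, Pi.single_apply]
  split_ifs <;> subst_vars <;> omega

lemma partialSum_shifted {A : ℕ → ℕ} {i j : ℕ} (hi : 1 ≤ i) (hij : i < j) (hAi : 1 ≤ A i)
    (t : ℕ) : partialSum (shifted A i j) t + (if i ≤ t then 1 else 0) =
      partialSum A t + (if j ≤ t then 1 else 0) := by
  rw [← partialSum_single hi, ← partialSum_single (hi.trans hij.le), ← partialSum_add,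
    ← partialSum_add, shifted_add_single hij.ne hAi]

lemma exists_tight_of_maximal {Y : ℕ → ℕ} (hY : validProfile m n Y) (hlose : ¬ mWin m k Y)
    (hmax : ∀ Z, validProfile m n Z → (∀ j, Y j ≤ Z j) → Y ≠ Z → mWin m k Z)
    {j : ℕ} (hj : 1 ≤ j) (hjm : j ≤ m) (hYj : Y j < n j) :
    ∃ s, j ≤ s ∧ s ≤ m ∧ partialSum Y s + 1 = k s := by
  have hZ : validProfile m n (Y + Pi.single j 1) := by
    refine ⟨fun l hl hlm => ?_, fun l hl => ?_⟩
    · by_cases h : l = j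
      · subst h; simpa using hYj
      · simpa [h] using hY.1 l hl hlm
    · simp [Pi.single_apply, hY.2 l hl]
      omega
  obtain ⟨s, hs, hsm, hks⟩ := mWin_iff.1 <|
    hmax _ hZ (fun l => by simp) (fun h => by simpa using congrFun h j)
  rw [partialSum_add, partialSum_single hj] at hks
  have := not_mWin_iff.1 hlose s hs hsm
  split_ifs at hks with hjs
  · exact ⟨s, hjs, hsm, by omega⟩
  · omega

lemma maximal_of_exists_tight {Y : ℕ → ℕ} (hY : validProfile m n Y)
    (htight : ∀ j, 1 ≤ j → j ≤ m → Y j < n j →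
      ∃ s, j ≤ s ∧ s ≤ m ∧ partialSum Y s + 1 = k s) :
    ∀ Z, validProfile m n Z → (∀ j, Y j ≤ Z j) → Y ≠ Z → mWin m k Z := by
  intro Z hZ hle hne
  obtain ⟨j, hj⟩ := Function.ne_iff.1 hne
  have hjm : 1 ≤ j ∧ j ≤ m := by
    by_contra h
    exact hj (by rw [hY.2 j (by omega), hZ.2 j (by omega)])
  have hlt : Y j < Z j := (hle j).lt_of_ne hj
  obtain ⟨s, hjs, hsm, hs⟩ := htight j hjm.1 hjm.2 (hlt.trans_le (hZ.1 j hjm.1 hjm.2))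
  have := partialSum_lt_partialSum hle hjm.1 hjs hlt
  exact mWin_iff.2 ⟨s, by omega, hsm, by omega⟩

lemma exists_tight_of_not_shifted {Y : ℕ → ℕ} (hY : validProfile m n Y)
    (hlose : ¬ mWin m k Y)
    (hns : ¬ ∃ A i j, validProfile m n A ∧ ¬ mWin m k A ∧ 1 ≤ i ∧ i < j ∧ j ≤ m ∧
        1 ≤ A i ∧ A j < n j ∧ Y = shifted A i j)
    {i j : ℕ} (hi : 1 ≤ i) (hij : i < j) (hjm : j ≤ m) (hYi : Y i < n i) (hYj : 1 ≤ Y j) :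
    ∃ s, i ≤ s ∧ s < j ∧ partialSum Y s + 1 = k s := by
  set A := Y + Pi.single i 1 - Pi.single j 1 with hA_def
  have hA_apply : ∀ l, A l = if l = i then Y l + 1 else if l = j then Y l - 1 else Y l := by
    intro l
    simp only [hA_def, Pi.sub_apply, Pi.add_apply, Pi.single_apply]
    split_ifs <;> subst_vars <;> omega
  have hYA : Y = shifted A i j := by
    funext l
    simp only [shifted, hA_apply]
    split_ifs <;> subst_vars <;> omega
  have hYjn := hY.1 j (by omega) hjm
  have hA : validProfile m n A := by
    refine ⟨fun l hl hlm => ?_, fun l hl => ?_⟩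
    · have := hY.1 l hl hlm
      rw [hA_apply]
      split_ifs <;> subst_vars <;> omega
    · rw [hA_apply, if_neg (by omega), if_neg (by omega), hY.2 l hl]
  have hAi : A i = Y i + 1 := by simp [hA_apply]
  have hAj : A j = Y j - 1 := by simp [hA_apply, hij.ne']
  have hwin : mWin m k A := by
    by_contra hAl
    exact hns ⟨A, i, j, hA, hAl, hi, hij, hjm, by omega, by omega, hYA⟩
  obtain ⟨s, hs, hsm, hks⟩ := mWin_iff.1 hwin
  have hshift := partialSum_shifted hi hij (by omega : 1 ≤ A i) s
  rw [← hYA] at hshift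
  have := not_mWin_iff.1 hlose s hs hsm
  split_ifs at hshift with his hjs <;> first | exact ⟨s, his, by omega, by omega⟩ | omega

lemma not_shifted_of_exists_tight {Y : ℕ → ℕ}
    (htight : ∀ i j, 1 ≤ i → i < j → j ≤ m → Y i < n i → 1 ≤ Y j →
      ∃ s, i ≤ s ∧ s < j ∧ partialSum Y s + 1 = k s) :
    ¬ ∃ A i j, validProfile m n A ∧ ¬ mWin m k A ∧ 1 ≤ i ∧ i < j ∧ j ≤ m ∧
        1 ≤ A i ∧ A j < n j ∧ Y = shifted A i j := by
  rintro ⟨A, i, j, hA, hAl, hi, hij, hjm, hAi, hAj, rfl⟩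
  have hAin := hA.1 i hi (by omega)
  obtain ⟨s, his, hsj, hs⟩ := htight i j hi hij hjm (by simp [shifted]; omega)
    (by simp [shifted, hij.ne'])
  have hshift := partialSum_shifted hi hij hAi s
  rw [if_pos his, if_neg (by omega)] at hshift
  exact hAl (mWin_iff.2 ⟨s, by omega, by omega, by omega⟩)

lemma le_partialSum_of_full {Y : ℕ → ℕ} {s t : ℕ}
    (hb : ∀ i, s < i → i ≤ t → k i < k (i - 1) + n i)
    (hfull : ∀ j, s < j → j ≤ t → Y j = n j) (hs : k s ≤ partialSum Y s + 1)
    (hst : s + 1 ≤ t) :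
    k t ≤ partialSum Y t := by
  induction t, hst using Nat.le_induction with
  | base =>
    have := hb (s + 1) (by omega) le_rfl
    rw [partialSum_succ, hfull (s + 1) (by omega) le_rfl]
    simp only [Nat.add_sub_cancel] at this
    omega
  | succ t hst ih =>
    have := ih (fun i h1 h2 => hb i h1 (by omega)) (fun j h1 h2 => hfull j h1 (by omega))
    have := hb (t + 1) (by omega) le_rfl
    rw [partialSum_succ, hfull (t + 1) (by omega) le_rfl]
    simp only [Nat.add_sub_cancel] at this
    omega

lemma tight_of_forall_deficient {Y : ℕ → ℕ} (hY : validProfile m n Y) (hlose : ¬ mWin m k Y)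
    (ha : k 1 ≤ n 1) {t : ℕ} (ht : 1 ≤ t) (htm : t ≤ m)
    (hb : ∀ i, 1 < i → i ≤ t → k i < k (i - 1) + n i)
    (h : ∀ i, 1 ≤ i → i ≤ t → Y i < n i →
      ∃ s, i ≤ s ∧ s ≤ t ∧ partialSum Y s + 1 = k s) :
    partialSum Y t + 1 = k t := by
  have hlose := not_mWin_iff.1 hlose
  have hY1 : Y 1 < n 1 := by
    have := hlose 1 le_rfl (by omega)
    rw [partialSum_one] at this
    omega
  set i := Nat.findGreatest (fun i => Y i < n i) t
  have hi : 1 ≤ i := Nat.le_findGreatest ht hY1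
  obtain ⟨s, his, hst, hs⟩ :=
    h i hi (Nat.findGreatest_le t) (Nat.findGreatest_spec (P := fun i => Y i < n i) ht hY1)
  rcases hst.eq_or_lt with rfl | hst
  · exact hs
  have hfull : ∀ j, s < j → j ≤ t → Y j = n j := fun j h1 h2 =>
    (hY.1 j (by omega) (by omega)).antisymm
      (not_lt.1 (Nat.findGreatest_is_greatest (P := fun i => Y i < n i) (by omega) h2))
  have := le_partialSum_of_full (fun l h1 h2 => hb l (by omega) h2) hfull hs.ge hst
  have := hlose t ht htm
  omega

lemma tight_of_tight_succ {Y : ℕ → ℕ} (hY : validProfile m n Y) (hlose : ¬ mWin m k Y)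
    (hns : ¬ ∃ A i j, validProfile m n A ∧ ¬ mWin m k A ∧ 1 ≤ i ∧ i < j ∧ j ≤ m ∧
        1 ≤ A i ∧ A j < n j ∧ Y = shifted A i j)
    (ha : k 1 ≤ n 1) {t : ℕ} (ht : 1 ≤ t) (htm : t < m)
    (hb : ∀ i, 1 < i → i ≤ t → k i < k (i - 1) + n i) (hk : k t < k (t + 1))
    (hsucc : partialSum Y (t + 1) + 1 = k (t + 1)) :
    partialSum Y t + 1 = k t := by
  have hYt : 1 ≤ Y (t + 1) := by
    have := not_mWin_iff.1 hlose t ht htm.le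
    rw [partialSum_succ] at hsucc
    omega
  refine tight_of_forall_deficient hY hlose ha ht htm.le hb fun i hi hit hYi => ?_
  obtain ⟨s, his, hst, hs⟩ := exists_tight_of_not_shifted hY hlose hns hi (by omega) htm hYi hYt
  exact ⟨s, his, by omega, hs⟩

lemma tight_of_shiftMaxLosing {Y : ℕ → ℕ} (hY : shiftMaxLosing m n (mWin m k) Y)
    (ha : k 1 ≤ n 1) (hkmono : ∀ i j, 1 ≤ i → i < j → j ≤ m → k i < k j)
    {c : ℕ} (hcm : c ≤ m)
    (hb : ∀ i, 1 < i → i ≤ c → k i < k (i - 1) + n i) (hc : partialSum Y c + 1 = k c) :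
    ∀ t, 1 ≤ t → t ≤ c → partialSum Y t + 1 = k t := by
  obtain ⟨hY, hlose, -, hns⟩ := hY
  intro t ht htc
  induction htc using Nat.decreasingInduction with
  | self => exact hc
  | of_succ t htc ih =>
    exact tight_of_tight_succ hY hlose hns ha ht (by omega) (fun i h1 h2 => hb i h1 (by omega))
      (hkmono t (t + 1) ht (by omega) (by omega)) (ih (by omega))

lemma eq_of_tight {Y Y' : ℕ → ℕ} (hY : validProfile m n Y) (hY' : validProfile m n Y')
    {c : ℕ} (htight : ∀ t, 1 ≤ t → t ≤ c → partialSum Y t + 1 = k t)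
    (htight' : ∀ t, 1 ≤ t → t ≤ c → partialSum Y' t + 1 = k t)
    (hagree : ∀ j, c < j → j ≤ m → Y j = Y' j) : Y = Y' := by
  have hsum : ∀ t, t ≤ c → partialSum Y t = partialSum Y' t := by
    intro t htc
    rcases Nat.eq_zero_or_pos t with rfl | ht
    · rw [partialSum_zero, partialSum_zero]
    · have := htight t ht htc
      have := htight' t ht htc
      omega
  funext j
  by_cases hj : 1 ≤ j ∧ j ≤ m
  · by_cases hjc : j ≤ c
    · obtain ⟨p, rfl⟩ : ∃ p, j = p + 1 := ⟨j - 1, by omega⟩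
      have h1 := hsum (p + 1) hjc
      have h2 := hsum p (by omega)
      rw [partialSum_succ, partialSum_succ] at h1
      omega
    · exact hagree j (by omega) hj.2
  · rw [hY.2 j (by omega), hY'.2 j (by omega)]

lemma shiftMaxLosing_of_tight {Y : ℕ → ℕ} (hY : validProfile m n Y) (hlose : ¬ mWin m k Y)
    (htight : ∀ t, 1 ≤ t → t < m → partialSum Y t + 1 = k t)
    (hroom : ∀ j, 1 ≤ j → j ≤ m → Y j < n j →
      ∃ s, j ≤ s ∧ s ≤ m ∧ partialSum Y s + 1 = k s) :
    shiftMaxLosing m n (mWin m k) Y :=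
  ⟨hY, hlose, maximal_of_exists_tight hY hroom,
    not_shifted_of_exists_tight fun i _ hi hij hjm _ _ =>
      ⟨i, le_rfl, hij, htight i hi (by omega)⟩⟩

lemma Mprof_one : Mprof m k 1 = k 1 - 1 := by simp [Mprof]

lemma Mprof_of_one_lt {j : ℕ} (h1 : 1 < j) (hjm : j ≤ m) : Mprof m k j = k j - k (j - 1) := by
  simp [Mprof, h1.ne', h1, hjm]

lemma Mprof_eq_zero (hm : 1 ≤ m) {j : ℕ} (hj : j = 0 ∨ m < j) : Mprof m k j = 0 := by
  simp only [Mprof]; rw [if_neg (by omega), if_neg (by omega)]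

lemma Mprof_le (ha : k 1 ≤ n 1) {j : ℕ} (hb : 1 < j → k j < k (j - 1) + n j) :
    Mprof m k j ≤ n j := by
  unfold Mprof
  split_ifs with h1 h2
  · subst h1; omega
  · have := hb h2.1; omega
  · omega

lemma partialSum_Mprof (hk1 : 0 < k 1)
    (hkmono : ∀ i j, 1 ≤ i → i < j → j ≤ m → k i < k j) :
    ∀ t, 1 ≤ t → t ≤ m → partialSum (Mprof m k) t + 1 = k t := by
  intro t ht htm
  induction t, ht using Nat.le_induction with
  | base => rw [partialSum_one, Mprof_one]; omega
  | succ t ht ih =>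
    have := hkmono t (t + 1) ht (by omega) htm
    rw [partialSum_succ, Mprof_of_one_lt (by omega) htm, Nat.add_sub_cancel]
    have := ih (by omega)
    omega

lemma validProfile_Mprof (hm : 1 ≤ m) (ha : k 1 ≤ n 1)
    (hb : ∀ i, 1 < i → i ≤ m → k i < k (i - 1) + n i) : validProfile m n (Mprof m k) :=
  ⟨fun _ _ hjm => Mprof_le ha fun h1 => hb _ h1 hjm, fun _ hj => Mprof_eq_zero hm hj⟩

lemma Mprof'_last : Mprof' m n k m = n m := by simp [Mprof']

lemma partialSum_Mprof'_of_lt {t : ℕ} (htm : t < m) :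
    partialSum (Mprof' m n k) t = partialSum (Mprof m k) t :=
  sum_congr rfl fun j hj => by simp only [Mprof']; rw [if_neg (by simp at hj; omega)]

lemma validProfile_Mprof' (hm : 1 ≤ m) (ha : k 1 ≤ n 1)
    (hb : ∀ i, 1 < i → i < m → k i < k (i - 1) + n i) : validProfile m n (Mprof' m n k) := by
  refine ⟨fun j _ hjm => ?_, fun j hj => ?_⟩ <;> simp only [Mprof']
  · split_ifs with hj
    · exact hj ▸ le_rfl
    · exact Mprof_le ha fun h1 => hb j h1 (by omega)
  · rw [if_neg (by omega), Mprof_eq_zero hm hj]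

lemma shiftMaxLosing_Mprof (hm : 1 ≤ m) (hk1 : 0 < k 1)
    (hkmono : ∀ i j, 1 ≤ i → i < j → j ≤ m → k i < k j) (ha : k 1 ≤ n 1)
    (hb : ∀ i, 1 < i → i ≤ m → k i < k (i - 1) + n i) :
    shiftMaxLosing m n (mWin m k) (Mprof m k) := by
  have hM := partialSum_Mprof hk1 hkmono
  refine shiftMaxLosing_of_tight (validProfile_Mprof hm ha hb)
    (not_mWin_iff.2 fun t ht htm => ?_) (fun t ht htm => hM t ht htm.le)
    (fun j hj hjm _ => ⟨j, le_rfl, hjm, hM j hj hjm⟩)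
  have := hM t ht htm
  omega

lemma eq_Mprof_of_shiftMaxLosing {Y : ℕ → ℕ} (hY : shiftMaxLosing m n (mWin m k) Y)
    (hm : 1 ≤ m) (hk1 : 0 < k 1) (hkmono : ∀ i j, 1 ≤ i → i < j → j ≤ m → k i < k j)
    (ha : k 1 ≤ n 1) (hb : ∀ i, 1 < i → i ≤ m → k i < k (i - 1) + n i) :
    Y = Mprof m k := by
  obtain ⟨hYv, hlose, hmax, -⟩ := id hY
  have hlast : partialSum Y m + 1 = k m :=
    tight_of_forall_deficient hYv hlose ha hm le_rfl hb fun _ hj hjm hYj =>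
      exists_tight_of_maximal hYv hlose hmax hj hjm hYj
  exact eq_of_tight hYv (validProfile_Mprof hm ha hb)
    (tight_of_shiftMaxLosing hY ha hkmono le_rfl hb hlast) (partialSum_Mprof hk1 hkmono)
    fun _ h1 h2 => by omega

lemma tight_pred_of_tight_last (hm : 2 ≤ m) (hB : k (m - 1) + n m ≤ k m) {Y : ℕ → ℕ}
    (hY : validProfile m n Y) (hlose : ¬ mWin m k Y) (hlast : partialSum Y m + 1 = k m) :
    Y m = n m ∧ partialSum Y (m - 1) + 1 = k (m - 1) := by
  obtain ⟨p, rfl⟩ : ∃ p, m = p + 1 := ⟨m - 1, by omega⟩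
  have := not_mWin_iff.1 hlose p (by omega) (by omega)
  have := hY.1 (p + 1) (by omega) le_rfl
  rw [partialSum_succ] at hlast
  rw [Nat.add_sub_cancel] at hB ⊢
  omega

lemma shiftMaxLosing_Mprof' (hm : 2 ≤ m) (hk1 : 0 < k 1)
    (hkmono : ∀ i j, 1 ≤ i → i < j → j ≤ m → k i < k j) (ha : k 1 ≤ n 1)
    (hb : ∀ i, 1 < i → i < m → k i < k (i - 1) + n i) (hB : k (m - 1) + n m ≤ k m) :
    shiftMaxLosing m n (mWin m k) (Mprof' m n k) := by
  have hM : ∀ t, 1 ≤ t → t < m → partialSum (Mprof' m n k) t + 1 = k t := fun t ht htm => by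
    rw [partialSum_Mprof'_of_lt htm]
    exact partialSum_Mprof hk1 hkmono t ht htm.le
  refine shiftMaxLosing_of_tight (validProfile_Mprof' (by omega) ha hb)
    (not_mWin_iff.2 fun t ht htm => ?_) hM fun j hj hjm hj' => ?_
  · rcases htm.lt_or_eq with htm | rfl
    · have := hM t ht htm
      omega
    · obtain ⟨p, rfl⟩ : ∃ p, t = p + 1 := ⟨t - 1, by omega⟩
      have := hM p (by omega) (by omega)
      rw [partialSum_succ, Mprof'_last]
      rw [Nat.add_sub_cancel] at hB
      omega
  · have hjm : j < m := hjm.lt_of_ne fun h => by rw [h, Mprof'_last] at hj'; omega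
    exact ⟨j, le_rfl, hjm.le, hM j hj hjm⟩

lemma eq_Mprof'_of_shiftMaxLosing {Y : ℕ → ℕ} (hY : shiftMaxLosing m n (mWin m k) Y)
    (hm : 2 ≤ m) (hk1 : 0 < k 1) (hkmono : ∀ i j, 1 ≤ i → i < j → j ≤ m → k i < k j)
    (ha : k 1 ≤ n 1) (hb : ∀ i, 1 < i → i < m → k i < k (i - 1) + n i)
    (hB : k (m - 1) + n m ≤ k m) :
    Y = Mprof' m n k := by
  obtain ⟨hYv, hlose, hmax, -⟩ := id hY
  have hb' : ∀ i, 1 < i → i ≤ m - 1 → k i < k (i - 1) + n i :=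
    fun i h1 h2 => hb i h1 (by omega)
  have hYm : Y m = n m := by
    by_contra h
    obtain ⟨s, hs, hsm, hts⟩ := exists_tight_of_maximal hYv hlose hmax (by omega) le_rfl
      ((hYv.1 m (by omega) le_rfl).lt_of_ne h)
    obtain rfl : s = m := by omega
    exact h (tight_pred_of_tight_last hm hB hYv hlose hts).1
  have hpen : partialSum Y (m - 1) + 1 = k (m - 1) :=
    tight_of_forall_deficient hYv hlose ha (by omega) (by omega) hb' fun j hj hjm hYj => by
      obtain ⟨s, hs, hsm, hts⟩ := exists_tight_of_maximal hYv hlose hmax hj (by omega) hYj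
      rcases hsm.lt_or_eq with hsm | rfl
      · exact ⟨s, hs, by omega, hts⟩
      · exact ⟨s - 1, hjm, le_rfl, (tight_pred_of_tight_last hm hB hYv hlose hts).2⟩
  refine eq_of_tight hYv (validProfile_Mprof' (by omega) ha hb)
    (tight_of_shiftMaxLosing hY ha hkmono (by omega) hb' hpen)
    (fun t ht htm => ?_) fun j h1 h2 => ?_
  · rw [partialSum_Mprof'_of_lt (by omega)]
    exact partialSum_Mprof hk1 hkmono t ht (by omega)
  · obtain rfl : j = m := by omega
    rw [hYm, Mprof'_last]

end HierarchicalGame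

theorem stmt_14_general (m : ℕ) (hm : 2 ≤ m) (n k : ℕ → ℕ)
    (hkpos : ∀ i, 1 ≤ i → i ≤ m → 0 < k i)
    (hkmono : ∀ i j, 1 ≤ i → i < j → j ≤ m → k i < k j)
    (ha : k 1 ≤ n 1)
    (hb : ∀ i, 1 < i → i < m → k i < k (i - 1) + n i) :
    (k m < k (m - 1) + n m →
      shiftMaxLosing m n (mWin m k) (Mprof m k) ∧
        ∀ Y, shiftMaxLosing m n (mWin m k) Y → Y = Mprof m k) ∧
    (k (m - 1) + n m ≤ k m →
      shiftMaxLosing m n (mWin m k) (Mprof' m n k) ∧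
        ∀ Y, shiftMaxLosing m n (mWin m k) Y → Y = Mprof' m n k) := by
  have hk1 : 0 < k 1 := hkpos 1 le_rfl (by omega)
  refine ⟨fun hA => ?_, fun hB => ?_⟩
  · have hb' : ∀ i, 1 < i → i ≤ m → k i < k (i - 1) + n i := fun i h1 h2 =>
      h2.lt_or_eq.elim (hb i h1) fun h => h ▸ hA
    exact ⟨shiftMaxLosing_Mprof (by omega) hk1 hkmono ha hb',
      fun Y hY => eq_Mprof_of_shiftMaxLosing hY (by omega) hk1 hkmono ha hb'⟩
  · exact ⟨shiftMaxLosing_Mprof' hm hk1 hkmono ha hb hB,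
      fun Y hY => eq_Mprof'_of_shiftMaxLosing hY hm hk1 hkmono ha hb hB⟩

/-- every canonical disjunctive hierarchical game `H_∃(n,k)`
(so `k_1 ≤ n_1` and `k_i < k_{i-1} + n_i` for `1 < i < m`) has exactly one
shift-maximal losing submultiset, namely `M` when `k_m < k_{m-1} + n_m` and
`M'` when `k_m ≥ k_{m-1} + n_m`. -/
theorem stmt_14 (m : ℕ) (hm : 2 ≤ m) (n k : ℕ → ℕ)
    (hnpos : ∀ i, 1 ≤ i → i ≤ m → 0 < n i)
    (hkpos : ∀ i, 1 ≤ i → i ≤ m → 0 < k i)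
    (hkmono : ∀ i j, 1 ≤ i → i < j → j ≤ m → k i < k j)
    (ha : k 1 ≤ n 1)
    (hb : ∀ i, 1 < i → i < m → k i < k (i - 1) + n i) :
    (k m < k (m - 1) + n m →
      shiftMaxLosing m n (mWin m k) (Mprof m k) ∧
        ∀ Y, shiftMaxLosing m n (mWin m k) Y → Y = Mprof m k) ∧
    (k (m - 1) + n m ≤ k m →
      shiftMaxLosing m n (mWin m k) (Mprof' m n k) ∧
        ∀ Y, shiftMaxLosing m n (mWin m k) Y → Y = Mprof' m n k) :=
  stmt_14_general m hm n k hkpos hkmono ha hb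
end

section
/- Characterization of weighted disjunctive hierarchical games: let G = H_∃(n,k) be the canonical m-level disjunctive hierarchical game (so k_1 ≤ n_1 and k_i < k_{i-1}+n_i for 1<i<m). Then G is a weighted majority game if and only if one of the following holds: (1) m=1; (2) m=2 and k_2 = k_1+1; (3) m=2 and n_2 = k_2−k_1+1; (4) k_1 = 1 and either m=2, or m=3 and the two-level game with sizes (n_2,n_3) and thresholds (k_2,k_3) satisfies (2) or (3) (i.e. k_3 = k_2+1 or n_3 = k_3−k_2+1); (5) m∈{2,3,4}, k_m ≥ k_{m-1}+n_m, and the (m−1)-level game with sizes (n_1,...,n_{m−1}) and thresholds (k_1,...,k_{m−1}) falls under one of (1)–(4). -/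
/-- The game `W` on `P̄ = {1^{n_1}, ..., m^{n_m}}` is a weighted majority game:
there are nonnegative real weights `w_1, ..., w_m` and a real threshold `q` such
that a submultiset is winning iff its total weight is at least `q`. -/
def mWeighted (m : ℕ) (n : ℕ → ℕ) (W : (ℕ → ℕ) → Prop) : Prop :=
  ∃ (w : ℕ → ℝ) (q : ℝ), (∀ i, 1 ≤ i → i ≤ m → 0 ≤ w i) ∧
    ∀ l, validProfile m n l →
      (W l ↔ q ≤ ∑ i ∈ Finset.Icc 1 m, (l i : ℝ) * w i)

/-- Conditions (1)-(4) of the Beimel–Tassa–Weinreb characterization for an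
`m`-level disjunctive hierarchical game with level sizes `n` and thresholds `k`:
(1) `m = 1`; (2) `m = 2` and `k_2 = k_1 + 1`; (3) `m = 2` and
`n_2 = k_2 - k_1 + 1`; (4) `k_1 = 1` and either `m = 2`, or `m = 3` and the
two-level game with sizes `(n_2, n_3)` and thresholds `(k_2, k_3)` satisfies
(2) or (3). -/
def cond14 (m : ℕ) (n k : ℕ → ℕ) : Prop :=
  m = 1 ∨
    (m = 2 ∧ k 2 = k 1 + 1) ∨
    (m = 2 ∧ n 2 = k 2 - k 1 + 1) ∨
    (k 1 = 1 ∧ (m = 2 ∨ (m = 3 ∧ (k 3 = k 2 + 1 ∨ n 3 = k 3 - k 2 + 1))))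

/-!
Weighted games admit no trade: if `a, b` are winning and `c, d` losing profiles, then
`a + b ≠ c + d`, because total weight is additive. Call level `i` a dummy if
`k_{i-1} + n_i ≤ k_i`; only the last level can be one. If `k_1 = 1`, a single member of level 1
wins, so the game is decided by the levels after it; let `s` be the first level that matters,
so that `2 ≤ k_s ≤ n_s`. Two non-dummy levels `s, s + 1` admit a trade unless
`k_{s+1} = k_s + 1` or `n_{s+1} = k_{s+1} - k_s + 1`, and three non-dummy levels always do.
Conversely, explicit integer weights handle the remaining one- and two-level games, and both
prepending a level with `k_1 = 1` and appending a dummy level preserve weightedness.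
-/

open Finset

lemma sum_Icc_one_add_one {M : Type*} [AddCommMonoid M] (f : ℕ → M) (i : ℕ) :
    ∑ j ∈ Icc 1 (i + 1), f j = f 1 + ∑ j ∈ Icc 1 i, f (j + 1) := by
  induction i with
  | zero => simp
  | succ i ih => rw [sum_Icc_succ_top (by omega), ih, sum_Icc_succ_top (by omega), add_assoc]

lemma sum_Icc_one_two {M : Type*} [AddCommMonoid M] (f : ℕ → M) :
    ∑ j ∈ Icc 1 2, f j = f 1 + f 2 := by
  simp [sum_Icc_one_add_one]

lemma not_mWin_zero (k l : ℕ → ℕ) : ¬ mWin 0 k l := by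
  rintro ⟨i, h1, h2, -⟩
  omega

lemma mWin_succ {m : ℕ} {k l : ℕ → ℕ} :
    mWin (m + 1) k l ↔ mWin m k l ∨ k (m + 1) ≤ ∑ j ∈ Icc 1 (m + 1), l j := by
  constructor
  · rintro ⟨i, h1, h2, h⟩
    rcases h2.lt_or_eq with h2 | rfl
    · exact Or.inl ⟨i, h1, by omega, h⟩
    · exact Or.inr h
  · rintro (⟨i, h1, h2, h⟩ | h)
    · exact ⟨i, h1, by omega, h⟩
    · exact ⟨m + 1, by omega, le_rfl, h⟩

lemma mWin_one {k l : ℕ → ℕ} : mWin 1 k l ↔ k 1 ≤ l 1 := by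
  simp [mWin_succ, not_mWin_zero]

lemma mWin_two {k l : ℕ → ℕ} : mWin 2 k l ↔ k 1 ≤ l 1 ∨ k 2 ≤ l 1 + l 2 := by
  simp [mWin_succ, not_mWin_zero, sum_Icc_one_two]

lemma mWin_succ_iff_of_k_one {m : ℕ} {k l : ℕ → ℕ} (hk : k 1 = 1) :
    mWin (m + 1) k l ↔ 1 ≤ l 1 ∨ mWin m (fun i => k (i + 1)) (fun i => l (i + 1)) := by
  constructor
  · rintro ⟨i, h1, h2, h⟩
    rcases Nat.eq_zero_or_pos (l 1) with hl | hl
    · obtain ⟨i, rfl⟩ : ∃ i', i = i' + 1 := ⟨i - 1, by omega⟩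
      rw [sum_Icc_one_add_one, hl, zero_add] at h
      refine Or.inr ⟨i, Nat.pos_of_ne_zero ?_, by omega, h⟩
      rintro rfl
      simp [hk] at h
    · exact Or.inl hl
  · rintro (h | ⟨i, h1, h2, h⟩)
    · exact ⟨1, le_rfl, by omega, by simpa [hk] using h⟩
    · dsimp only at h
      exact ⟨i + 1, by omega, by omega, by rw [sum_Icc_one_add_one]; omega⟩

lemma mWin_succ_iff_of_dummy {m : ℕ} {n k l : ℕ → ℕ} (hm : 1 ≤ m)
    (hD : k m + n (m + 1) ≤ k (m + 1)) (hl : l (m + 1) ≤ n (m + 1)) :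
    mWin (m + 1) k l ↔ mWin m k l := by
  rw [mWin_succ, or_iff_left_of_imp]
  intro h
  rw [sum_Icc_succ_top (by omega)] at h
  exact ⟨m, hm, le_rfl, by omega⟩

def natWeighted (m : ℕ) (n k : ℕ → ℕ) : Prop :=
  ∃ (w : ℕ → ℕ) (q : ℕ), ∀ l, (∀ j, 1 ≤ j → j ≤ m → l j ≤ n j) →
    (mWin m k l ↔ q ≤ ∑ i ∈ Icc 1 m, l i * w i)

namespace natWeighted

variable {m : ℕ} {n k : ℕ → ℕ}

lemma mWeighted (h : natWeighted m n k) : mWeighted m n (mWin m k) := by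
  obtain ⟨w, q, hw⟩ := h
  refine ⟨fun i => (w i : ℝ), q, fun i _ _ => Nat.cast_nonneg _, fun l hl => ?_⟩
  rw [hw l hl.1, ← Nat.cast_le (α := ℝ)]
  push_cast
  rfl

lemma cons (hk : k 1 = 1) (h : natWeighted m (fun i => n (i + 1)) (fun i => k (i + 1))) :
    natWeighted (m + 1) n k := by
  obtain ⟨w, q, hw⟩ := h
  -- a single member of level 1 already wins, so level 1 gets the whole quota as weight
  refine ⟨fun i => if i ≤ 1 then q else w (i - 1), q, fun l hl => ?_⟩
  have hsum : ∑ i ∈ Icc 1 (m + 1), l i * (if i ≤ 1 then q else w (i - 1)) =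
      l 1 * q + ∑ i ∈ Icc 1 m, l (i + 1) * w i := by
    rw [sum_Icc_one_add_one]
    refine congrArg _ (sum_congr rfl fun i hi => ?_)
    rw [if_neg (by have := (mem_Icc.1 hi).1; omega), Nat.add_sub_cancel]
  rw [mWin_succ_iff_of_k_one hk, hw _ (fun j h1 h2 => hl (j + 1) (by omega) (by omega)), hsum]
  rcases Nat.eq_zero_or_pos (l 1) with h0 | hpos
  · simp [h0]
  · have : q ≤ l 1 * q := Nat.le_mul_of_pos_left q hpos
    exact iff_of_true (Or.inl hpos) (by omega)

lemma snoc (hm : 1 ≤ m) (hD : k m + n (m + 1) ≤ k (m + 1)) (h : natWeighted m n k) :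
    natWeighted (m + 1) n k := by
  obtain ⟨w, q, hw⟩ := h
  refine ⟨fun i => if i ≤ m then w i else 0, q, fun l hl => ?_⟩
  have hsum : ∑ i ∈ Icc 1 (m + 1), l i * (if i ≤ m then w i else 0) =
      ∑ i ∈ Icc 1 m, l i * w i := by
    rw [sum_Icc_succ_top (by omega), if_neg (by omega), mul_zero, add_zero]
    exact sum_congr rfl fun i hi => by rw [if_pos (mem_Icc.1 hi).2]
  rw [mWin_succ_iff_of_dummy hm hD (hl _ (by omega) le_rfl),
    hw l (fun j h1 h2 => hl j h1 (by omega)), hsum]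

end natWeighted

lemma natWeighted_one (n k : ℕ → ℕ) : natWeighted 1 n k :=
  ⟨fun _ => 1, k 1, fun l _ => by simp [mWin_one]⟩

lemma natWeighted_two_of_k_two_eq {n k : ℕ → ℕ} (h : k 2 = k 1 + 1) : natWeighted 2 n k := by
  refine ⟨fun i => if i = 1 then k 1 + 1 else k 1, k 1 * (k 1 + 1), fun l _ => ?_⟩
  simp only [mWin_two, sum_Icc_one_two, h, ↓reduceIte, OfNat.ofNat_ne_one]
  constructor
  · rintro (h1 | h1) <;> nlinarith
  · intro hq
    by_contra! hc
    nlinarith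

lemma natWeighted_two_of_n_two_eq {n k : ℕ → ℕ} (h : n 2 = k 2 - k 1 + 1) (hk1 : 0 < k 1)
    (hk12 : k 1 < k 2) : natWeighted 2 n k := by
  obtain ⟨K, hK⟩ : ∃ K, k 1 = K + 1 := ⟨k 1 - 1, by omega⟩
  -- with `l 2 ≤ n 2`, the weight `l 1 * (n 2 + 1) + l 2` orders profiles lexicographically
  refine ⟨fun i => if i = 1 then n 2 + 1 else 1, K * (n 2 + 1) + n 2, fun l hl => ?_⟩
  have hl2 : l 2 ≤ n 2 := hl 2 (by omega) le_rfl
  simp only [mWin_two, sum_Icc_one_two, ↓reduceIte, OfNat.ofNat_ne_one, mul_one]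
  rcases lt_trichotomy (l 1) K with hl1 | hl1 | hl1
  · have : l 1 * (n 2 + 1) + (n 2 + 1) ≤ K * (n 2 + 1) := by nlinarith
    omega
  · subst hl1
    omega
  · have : K * (n 2 + 1) + (n 2 + 1) ≤ l 1 * (n 2 + 1) := by nlinarith
    omega

lemma not_mWeighted_of_trade {m : ℕ} {n : ℕ → ℕ} {W : (ℕ → ℕ) → Prop} {a b c d : ℕ → ℕ}
    (ha : validProfile m n a) (hb : validProfile m n b)
    (hc : validProfile m n c) (hd : validProfile m n d)
    (hWa : W a) (hWb : W b) (hWc : ¬ W c) (hWd : ¬ W d) (htrade : a + b = c + d) :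
    ¬ mWeighted m n W := by
  rintro ⟨w, q, -, hw⟩
  have hweight : ∀ x y : ℕ → ℕ, ∑ i ∈ Icc 1 m, ((x i : ℝ) * w i) + ∑ i ∈ Icc 1 m, (y i : ℝ) * w i =
      ∑ i ∈ Icc 1 m, ((x + y) i : ℝ) * w i := fun x y => by
    rw [← sum_add_distrib]
    exact sum_congr rfl fun i _ => by rw [Pi.add_apply, Nat.cast_add, add_mul]
  have := hweight a b
  rw [htrade, ← hweight] at this
  linarith [(hw a ha).1 hWa, (hw b hb).1 hWb, not_le.1 (mt (hw c hc).2 hWc),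
    not_le.1 (mt (hw d hd).2 hWd)]

def blockProfile (s x y z : ℕ) : ℕ → ℕ := fun j =>
  if j = s then x else if j = s + 1 then y else if j = s + 2 then z else 0

section blockProfile

variable {m s x y z : ℕ} {n k : ℕ → ℕ}

lemma sum_blockProfile (hs : 1 ≤ s) (i : ℕ) :
    ∑ j ∈ Icc 1 i, blockProfile s x y z j =
      (if s ≤ i then x else 0) + (if s + 1 ≤ i then y else 0) + (if s + 2 ≤ i then z else 0) := by
  have : blockProfile s x y z = fun j =>
      (if s = j then x else 0) + (if s + 1 = j then y else 0) + (if s + 2 = j then z else 0) := by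
    ext j
    simp only [blockProfile]
    split_ifs <;> omega
  simp only [this, sum_add_distrib, sum_ite_eq, mem_Icc]
  split_ifs <;> omega

lemma validProfile_blockProfile (hs : 1 ≤ s) (hsm : s ≤ m) (hym : y = 0 ∨ s + 1 ≤ m)
    (hzm : z = 0 ∨ s + 2 ≤ m) (hx : x ≤ n s) (hy : y ≤ n (s + 1)) (hz : z ≤ n (s + 2)) :
    validProfile m n (blockProfile s x y z) := by
  refine ⟨fun j _ _ => ?_, fun j hj => ?_⟩ <;> simp only [blockProfile] <;>
    split_ifs with h1 h2 h3 <;> subst_vars <;> omega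

lemma mWin_blockProfile_iff (hk : StrictMonoOn k (Set.Icc 1 m)) (hk1 : 0 < k 1) (hs : 1 ≤ s) :
    mWin m k (blockProfile s x y z) ↔
      (s ≤ m ∧ k s ≤ x) ∨ (s + 1 ≤ m ∧ k (s + 1) ≤ x + y) ∨ (s + 2 ≤ m ∧ k (s + 2) ≤ x + y + z) := by
  constructor
  · rintro ⟨i, h1, h2, h⟩
    rw [sum_blockProfile hs] at h
    rcases (show i < s ∨ i = s ∨ i = s + 1 ∨ s + 2 ≤ i by omega) with hi | rfl | rfl | hi
    · have : k 1 ≤ k i := hk.monotoneOn ⟨le_rfl, by omega⟩ ⟨h1, h2⟩ h1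
      split_ifs at h <;> omega
    · split_ifs at h <;> omega
    · split_ifs at h <;> omega
    · have : k (s + 2) ≤ k i := hk.monotoneOn ⟨by omega, by omega⟩ ⟨h1, h2⟩ hi
      split_ifs at h <;> omega
  · rintro (⟨hm, h⟩ | ⟨hm, h⟩ | ⟨hm, h⟩)
    · exact ⟨s, hs, hm, by rw [sum_blockProfile hs]; split_ifs <;> omega⟩
    · exact ⟨s + 1, by omega, hm, by rw [sum_blockProfile hs]; split_ifs <;> omega⟩
    · exact ⟨s + 2, by omega, hm, by rw [sum_blockProfile hs]; split_ifs <;> omega⟩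

end blockProfile

section obstructions

variable {m s : ℕ} {n k : ℕ → ℕ}

lemma not_mWeighted_of_two_levels (hk : StrictMonoOn k (Set.Icc 1 m)) (hk1 : 0 < k 1)
    (hs : 1 ≤ s) (hsm : s + 1 ≤ m) (hks : 2 ≤ k s) (hns : k s ≤ n s)
    (hgap : k s + 2 ≤ k (s + 1)) (hn : k (s + 1) - k s + 2 ≤ n (s + 1)) :
    ¬ mWeighted m n (mWin m k) := by
  have hk2 : s + 2 ≤ m → k (s + 1) < k (s + 2) := fun h => hk ⟨by omega, hsm⟩ ⟨by omega, h⟩ (by omega)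
  have hval : ∀ x y, x ≤ n s → y ≤ n (s + 1) → validProfile m n (blockProfile s x y 0) :=
    fun x y hx hy => validProfile_blockProfile hs (by omega) (by omega) (Or.inl rfl) hx hy (by omega)
  apply not_mWeighted_of_trade (W := mWin m k)
    (hval (k s) 0 hns (by omega)) (hval (k s - 2) (k (s + 1) - k s + 2) (by omega) hn)
    (hval (k s - 1) 2 (by omega) (by omega)) (hval (k s - 1) (k (s + 1) - k s) (by omega) (by omega))
  case hWa | hWb | hWc | hWd => rw [mWin_blockProfile_iff hk hk1 hs]; omega
  case htrade => ext j; simp only [Pi.add_apply, blockProfile]; split_ifs <;> omega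

lemma not_mWeighted_of_three_levels (hk : StrictMonoOn k (Set.Icc 1 m)) (hk1 : 0 < k 1)
    (hs : 1 ≤ s) (hsm : s + 2 ≤ m) (hks : 2 ≤ k s) (hns : k s ≤ n s)
    (hn1 : k (s + 1) < k s + n (s + 1)) (hn2 : k (s + 2) < k (s + 1) + n (s + 2)) :
    ¬ mWeighted m n (mWin m k) := by
  have hk01 : k s < k (s + 1) := hk ⟨hs, by omega⟩ ⟨by omega, by omega⟩ (by omega)
  have hk12 : k (s + 1) < k (s + 2) := hk ⟨by omega, by omega⟩ ⟨by omega, hsm⟩ (by omega)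
  have hval : ∀ x y z, x ≤ n s → y ≤ n (s + 1) → z ≤ n (s + 2) →
      validProfile m n (blockProfile s x y z) :=
    fun x y z hx hy hz => validProfile_blockProfile hs (by omega) (by omega) (by omega) hx hy hz
  apply not_mWeighted_of_trade (W := mWin m k)
    (hval (k s) 0 0 hns (by omega) (by omega))
    (hval (k s - 2) (k (s + 1) - k s + 1) (k (s + 2) - k (s + 1) + 1) (by omega) (by omega) (by omega))
    (hval (k s - 1) 1 1 (by omega) (by omega) (by omega))
    (hval (k s - 1) (k (s + 1) - k s) (k (s + 2) - k (s + 1)) (by omega) (by omega) (by omega))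
  case hWa | hWb | hWc | hWd => rw [mWin_blockProfile_iff hk hk1 hs]; omega
  case htrade => ext j; simp only [Pi.add_apply, blockProfile]; split_ifs <;> omega

end obstructions

lemma tail_of_mWeighted {m s : ℕ} {n k : ℕ → ℕ} (hk : StrictMonoOn k (Set.Icc 1 m))
    (hk1 : 0 < k 1) (hs : 1 ≤ s) (hsm : s + 1 ≤ m) (hks : 2 ≤ k s) (hns : k s ≤ n s)
    (hb : ∀ i, s ≤ i → i + 1 < m → k (i + 1) < k i + n (i + 1))
    (hW : mWeighted m n (mWin m k)) :
    (m = s + 1 ∧ (k (s + 1) = k s + 1 ∨ n (s + 1) = k (s + 1) - k s + 1 ∨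
        k s + n (s + 1) ≤ k (s + 1))) ∨
      (m = s + 2 ∧ (k (s + 1) = k s + 1 ∨ n (s + 1) = k (s + 1) - k s + 1) ∧
        k (s + 1) + n (s + 2) ≤ k (s + 2)) := by
  have hk01 : k s < k (s + 1) := hk ⟨hs, by omega⟩ ⟨by omega, hsm⟩ (by omega)
  have hpair : k (s + 1) < k s + n (s + 1) →
      k (s + 1) = k s + 1 ∨ n (s + 1) = k (s + 1) - k s + 1 := fun hnd => by
    by_contra! h
    exact not_mWeighted_of_two_levels hk hk1 hs hsm hks hns (by omega) (by omega) hW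
  rcases (show m = s + 1 ∨ m = s + 2 ∨ s + 3 ≤ m by omega) with rfl | rfl | hm
  · by_cases hD : k s + n (s + 1) ≤ k (s + 1)
    · exact Or.inl ⟨rfl, by omega⟩
    · exact Or.inl ⟨rfl, by have := hpair (by omega); omega⟩
  · have hn1 := hb s le_rfl (by omega)
    refine Or.inr ⟨rfl, hpair hn1, ?_⟩
    by_contra! hn2
    exact not_mWeighted_of_three_levels hk hk1 hs le_rfl hks hns hn1 hn2 hW
  · exact absurd hW (not_mWeighted_of_three_levels hk hk1 hs (by omega) hks hns
      (hb s le_rfl (by omega)) (hb (s + 1) (by omega) (by omega)))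

lemma cond_of_mWeighted {m : ℕ} {n k : ℕ → ℕ} (hm : 1 ≤ m) (hk : StrictMonoOn k (Set.Icc 1 m))
    (hk1 : 0 < k 1) (ha : k 1 ≤ n 1)
    (hb : ∀ i, 1 ≤ i → i + 1 < m → k (i + 1) < k i + n (i + 1))
    (hW : mWeighted m n (mWin m k)) :
    cond14 m n k ∨ ((m = 2 ∨ m = 3 ∨ m = 4) ∧ k (m - 1) + n m ≤ k m ∧ cond14 (m - 1) n k) := by
  rcases (show m = 1 ∨ 2 ≤ m by omega) with rfl | hm2
  · exact Or.inl (Or.inl rfl)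
  by_cases hk1' : k 1 = 1
  · rcases (show m = 2 ∨ 3 ≤ m by omega) with rfl | hm3
    · exact Or.inl (Or.inr (Or.inr (Or.inr ⟨hk1', Or.inl rfl⟩)))
    have hk12 : k 1 < k 2 := hk ⟨le_rfl, by omega⟩ ⟨by omega, by omega⟩ (by omega)
    have hn2 : k 2 < k 1 + n 2 := hb 1 le_rfl (by omega)
    rcases tail_of_mWeighted hk hk1 (s := 2) (by omega) hm3 (by omega) (by omega)
      (fun i hi => hb i (by omega)) hW with ⟨rfl, h⟩ | ⟨rfl, h⟩ <;>
      norm_num [cond14] at h ⊢ <;> omega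
  · rcases tail_of_mWeighted hk hk1 (s := 1) le_rfl hm2 (by omega) ha hb hW with
      ⟨rfl, h⟩ | ⟨rfl, h⟩ <;> norm_num [cond14] at h ⊢ <;> omega

lemma natWeighted_of_cond14 {m : ℕ} {n k : ℕ → ℕ} (hk : StrictMonoOn k (Set.Icc 1 m))
    (hk1 : 0 < k 1) (h : cond14 m n k) : natWeighted m n k := by
  rcases h with rfl | ⟨rfl, h⟩ | ⟨rfl, h⟩ | ⟨h1, rfl | ⟨rfl, h | h⟩⟩
  · exact natWeighted_one n k
  · exact natWeighted_two_of_k_two_eq h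
  · exact natWeighted_two_of_n_two_eq h hk1 (hk ⟨le_rfl, by omega⟩ ⟨by omega, le_rfl⟩ (by omega))
  · exact (natWeighted_one _ _).cons h1
  · exact (natWeighted_two_of_k_two_eq h).cons h1
  · have hk12 : k 1 < k 2 := hk ⟨le_rfl, by omega⟩ ⟨by omega, by omega⟩ (by omega)
    have hk23 : k 2 < k 3 := hk ⟨by omega, by omega⟩ ⟨by omega, le_rfl⟩ (by omega)
    exact (natWeighted_two_of_n_two_eq (k := fun i => k (i + 1)) h (hk1.trans hk12) hk23).cons h1

lemma mWeighted_of_cond {m : ℕ} {n k : ℕ → ℕ} (hk : StrictMonoOn k (Set.Icc 1 m))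
    (hk1 : 0 < k 1)
    (h : cond14 m n k ∨ ((m = 2 ∨ m = 3 ∨ m = 4) ∧ k (m - 1) + n m ≤ k m ∧ cond14 (m - 1) n k)) :
    mWeighted m n (mWin m k) := by
  rcases h with h | ⟨hm, hD, h⟩
  · exact (natWeighted_of_cond14 hk hk1 h).mWeighted
  · obtain ⟨m, rfl⟩ : ∃ m', m = m' + 1 := ⟨m - 1, by omega⟩
    rw [Nat.add_sub_cancel] at hD h
    have hk' := hk.mono (Set.Icc_subset_Icc_right (Nat.le_succ m))
    exact ((natWeighted_of_cond14 hk' hk1 h).snoc (by omega) hD).mWeighted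

theorem stmt_16_general (m : ℕ) (hm : 1 ≤ m) (n k : ℕ → ℕ)
    (hkpos : ∀ i, 1 ≤ i → i ≤ m → 0 < k i)
    (hkmono : ∀ i j, 1 ≤ i → i < j → j ≤ m → k i < k j)
    (ha : k 1 ≤ n 1)
    (hb : ∀ i, 1 < i → i < m → k i < k (i - 1) + n i) :
    mWeighted m n (mWin m k) ↔
      (cond14 m n k ∨
        ((m = 2 ∨ m = 3 ∨ m = 4) ∧ k (m - 1) + n m ≤ k m ∧
          cond14 (m - 1) n k)) := by
  have hk : StrictMonoOn k (Set.Icc 1 m) := fun i hi j hj hij => hkmono i j hi.1 hij hj.2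
  have hk1 : 0 < k 1 := hkpos 1 le_rfl hm
  have hb' : ∀ i, 1 ≤ i → i + 1 < m → k (i + 1) < k i + n (i + 1) := fun i hi him => by
    simpa using hb (i + 1) (by omega) him
  exact ⟨cond_of_mWeighted hm hk hk1 ha hb', mWeighted_of_cond hk hk1⟩

/-- a canonical `m`-level disjunctive hierarchical game
`G = H_∃(n,k)` (so `k_1 ≤ n_1` and `k_i < k_{i-1} + n_i` for `1 < i < m`) is a
weighted majority game iff one of (1)-(4) holds, or (5): `m ∈ {2,3,4}`,
`k_m ≥ k_{m-1} + n_m`, and the `(m-1)`-level game with sizes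
`(n_1, ..., n_{m-1})` and thresholds `(k_1, ..., k_{m-1})` falls under (1)-(4). -/
theorem stmt_16 (m : ℕ) (hm : 1 ≤ m) (n k : ℕ → ℕ)
    (hnpos : ∀ i, 1 ≤ i → i ≤ m → 0 < n i)
    (hkpos : ∀ i, 1 ≤ i → i ≤ m → 0 < k i)
    (hkmono : ∀ i j, 1 ≤ i → i < j → j ≤ m → k i < k j)
    (ha : k 1 ≤ n 1)
    (hb : ∀ i, 1 < i → i < m → k i < k (i - 1) + n i) :
    mWeighted m n (mWin m k) ↔
      (cond14 m n k ∨
        ((m = 2 ∨ m = 3 ∨ m = 4) ∧ k (m - 1) + n m ≤ k m ∧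
          cond14 (m - 1) n k)) :=
  stmt_16_general m hm n k hkpos hkmono ha hb
end

section
/- A two-level disjunctive hierarchical game with a large gap and a large second level is not weighted: let G = H_∃((n_1,n_2),(k_1,k_2)) be the canonical two-level disjunctive hierarchical game with 2 ≤ k_1 ≤ n_1, k_2 ≥ k_1+2, and n_2 ≥ k_2−k_1+2. Then G is not a weighted majority game; in fact G admits the certificate of non-weightedness ({1^{k_1}}, {1^{k_1−2}, 2^{k_2−k_1+2}} ; {1^{k_1−1}, 2^{⌊(k_2−k_1+2)/2⌋}}, {1^{k_1−1}, 2^{⌈(k_2−k_1+2)/2⌉}}). -/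
/-!
A weighted game gives both sides of a trading transform the same total weight, so it cannot make
both left-hand coalitions winning and both right-hand ones losing. Here `{1^{k₁}}` wins by the
first condition and `{1^{k₁-2}, 2^{m}}`, `m = k₂ - k₁ + 2`, by the second; redistributing their
players gives twice `k₁ - 1` level-1 players and splits the `m` level-2 players in halves, and
`k₁ - 1 + ⌈m/2⌉ < k₂` exactly because `k₂ ≥ k₁ + 2`.
-/

/-- Winning predicate of the canonical two-level disjunctive hierarchical game
`H_∃((n_1,n_2),(k_1,k_2))`: `{1^{ℓ_1}, 2^{ℓ_2}}` is winning iff `ℓ_1 ≥ k_1` or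
`ℓ_1 + ℓ_2 ≥ k_2`. -/
def win2 (k1 k2 l1 l2 : ℕ) : Prop :=
  k1 ≤ l1 ∨ k2 ≤ l1 + l2

/-- The two-level game is a weighted majority game: there are nonnegative real
weights `w_1, w_2` and a real `q` with `{1^{ℓ_1}, 2^{ℓ_2}}` winning iff
`ℓ_1 w_1 + ℓ_2 w_2 ≥ q`. -/
def weighted2 (n1 n2 k1 k2 : ℕ) : Prop :=
  ∃ (w1 w2 q : ℝ), 0 ≤ w1 ∧ 0 ≤ w2 ∧
    ∀ l1 l2 : ℕ, l1 ≤ n1 → l2 ≤ n2 →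
      (win2 k1 k2 l1 l2 ↔ q ≤ (l1 : ℝ) * w1 + (l2 : ℝ) * w2)

lemma not_win2_iff {k1 k2 l1 l2 : ℕ} : ¬ win2 k1 k2 l1 l2 ↔ l1 < k1 ∧ l1 + l2 < k2 := by
  simp only [win2, not_or, not_le]

lemma not_weighted2_of_trading {n1 n2 k1 k2 a1 a2 b1 b2 c1 c2 d1 d2 : ℕ}
    (ha : a1 ≤ n1 ∧ a2 ≤ n2) (hb : b1 ≤ n1 ∧ b2 ≤ n2)
    (hc : c1 ≤ n1 ∧ c2 ≤ n2) (hd : d1 ≤ n1 ∧ d2 ≤ n2)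
    (htrade₁ : a1 + b1 = c1 + d1) (htrade₂ : a2 + b2 = c2 + d2)
    (ha_win : win2 k1 k2 a1 a2) (hb_win : win2 k1 k2 b1 b2)
    (hc_lose : ¬ win2 k1 k2 c1 c2) (hd_lose : ¬ win2 k1 k2 d1 d2) :
    ¬ weighted2 n1 n2 k1 k2 := by
  rintro ⟨w1, w2, q, -, -, h⟩
  have ha_q := (h a1 a2 ha.1 ha.2).mp ha_win
  have hb_q := (h b1 b2 hb.1 hb.2).mp hb_win
  have hc_q := (h c1 c2 hc.1 hc.2).not.mp hc_lose
  have hd_q := (h d1 d2 hd.1 hd.2).not.mp hd_lose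
  have htotal : ((a1 + b1 : ℕ) : ℝ) * w1 + ((a2 + b2 : ℕ) : ℝ) * w2
      = ((c1 + d1 : ℕ) : ℝ) * w1 + ((c2 + d2 : ℕ) : ℝ) * w2 := by
    rw [htrade₁, htrade₂]
  push_cast at htotal
  linarith

/-- a two-level disjunctive hierarchical game with
`2 ≤ k_1 ≤ n_1`, `k_2 ≥ k_1 + 2` and `n_2 ≥ k_2 - k_1 + 2` is not a weighted
majority game; in fact it admits the certificate of non-weightedness
`({1^{k_1}}, {1^{k_1-2}, 2^{k_2-k_1+2}} ; {1^{k_1-1}, 2^{⌊(k_2-k_1+2)/2⌋}},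
{1^{k_1-1}, 2^{⌈(k_2-k_1+2)/2⌉}})`: the level-wise totals on the two sides
agree (a trading transform), the two left-hand submultisets are valid and
winning, and the two right-hand submultisets are valid and losing. -/
theorem stmt_17 (n1 n2 k1 k2 : ℕ)
    (hk1 : 2 ≤ k1) (hk1n1 : k1 ≤ n1)
    (hk2 : k1 + 2 ≤ k2) (hn2 : k2 - k1 + 2 ≤ n2) :
    ¬ weighted2 n1 n2 k1 k2 ∧
      (k1 + (k1 - 2) = (k1 - 1) + (k1 - 1) ∧
        0 + (k2 - k1 + 2) = (k2 - k1 + 2) / 2 + (k2 - k1 + 2 + 1) / 2) ∧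
      (k1 ≤ n1 ∧ 0 ≤ n2) ∧ win2 k1 k2 k1 0 ∧
      (k1 - 2 ≤ n1 ∧ k2 - k1 + 2 ≤ n2) ∧ win2 k1 k2 (k1 - 2) (k2 - k1 + 2) ∧
      (k1 - 1 ≤ n1 ∧ (k2 - k1 + 2) / 2 ≤ n2) ∧
      ¬ win2 k1 k2 (k1 - 1) ((k2 - k1 + 2) / 2) ∧
      (k1 - 1 ≤ n1 ∧ (k2 - k1 + 2 + 1) / 2 ≤ n2) ∧
      ¬ win2 k1 k2 (k1 - 1) ((k2 - k1 + 2 + 1) / 2) := by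
  have htrade : k1 + (k1 - 2) = (k1 - 1) + (k1 - 1) ∧
      0 + (k2 - k1 + 2) = (k2 - k1 + 2) / 2 + (k2 - k1 + 2 + 1) / 2 := by omega
  have hX₁ : k1 ≤ n1 ∧ 0 ≤ n2 := ⟨hk1n1, Nat.zero_le _⟩
  have hX₂ : k1 - 2 ≤ n1 ∧ k2 - k1 + 2 ≤ n2 := ⟨by omega, hn2⟩
  have hY₁ : k1 - 1 ≤ n1 ∧ (k2 - k1 + 2) / 2 ≤ n2 := by omega
  have hY₂ : k1 - 1 ≤ n1 ∧ (k2 - k1 + 2 + 1) / 2 ≤ n2 := by omega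
  have hX₁_win : win2 k1 k2 k1 0 := Or.inl le_rfl
  have hX₂_win : win2 k1 k2 (k1 - 2) (k2 - k1 + 2) := Or.inr (by omega)
  have hY₁_lose : ¬ win2 k1 k2 (k1 - 1) ((k2 - k1 + 2) / 2) := not_win2_iff.mpr (by omega)
  have hY₂_lose : ¬ win2 k1 k2 (k1 - 1) ((k2 - k1 + 2 + 1) / 2) := not_win2_iff.mpr (by omega)
  exact ⟨not_weighted2_of_trading hX₁ hX₂ hY₁ hY₂ htrade.1 htrade.2 hX₁_win hX₂_win hY₁_lose
    hY₂_lose, htrade, hX₁, hX₁_win, hX₂, hX₂_win, hY₁, hY₁_lose, hY₂, hY₂_lose⟩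
end
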